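/- For c ∈ [-1,1], the maximum of M(a,b) = ((1-a)b²+(1-b)a²)/(a+b-ab) over pairs (a,b) ∈ [0,1]² with b - a = c is attained at a_c = (4 - c - √(8 + c²))/2 and equals M*(c) = 8 - (8 + (c² + 8)^{3/2})/(c² + 4). -/
import Mathlib


open Set

/-- `M(a,b) = ((1-a)b² + (1-b)a²)/(a + b - ab)` (with `M(0,0) = 0`). -/
noncomputable def Mdist (a b : ℝ) : ℝ :=
  ((1 - a) * b ^ 2 + (1 - b) * a ^ 2) / (a + b - a * b)

/-- `M*(c) = 8 - (8 + (c² + 8)^{3/2})/(c² + 4)`. -/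
noncomputable def Mstar (c : ℝ) : ℝ :=
  8 - (8 + (c ^ 2 + 8) ^ ((3:ℝ) / 2)) / (c ^ 2 + 4)

private lemma aux_Q (a b : ℝ) (ha0 : 0 ≤ a) (ha1 : a ≤ 1) (hb0 : 0 ≤ b) (hb1 : b ≤ 1) :
    0 ≤ (8*(b-a)^2+24)*(a+b-a*b) - ((b-a)^2+4)*((1-a)*b^2+(1-b)*a^2) := by
  nlinarith [mul_nonneg ha0 hb0, mul_nonneg (mul_nonneg ha0 hb0) (mul_nonneg ha0 hb0),
    mul_nonneg (sub_nonneg.2 ha1) (sub_nonneg.2 hb1), sq_nonneg (a-b), sq_nonneg (a+b),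
    mul_nonneg (mul_nonneg ha0 ha0) hb0, mul_nonneg (mul_nonneg hb0 hb0) ha0,
    mul_nonneg (mul_nonneg ha0 hb0) (sub_nonneg.2 ha1),
    mul_nonneg (mul_nonneg ha0 hb0) (sub_nonneg.2 hb1),
    mul_nonneg (mul_nonneg ha0 (sub_nonneg.2 hb1)) (sub_nonneg.2 ha1),
    mul_nonneg (mul_nonneg hb0 (sub_nonneg.2 ha1)) (sub_nonneg.2 hb1)]

private lemma aux_R (a b : ℝ) (ha0 : 0 ≤ a) (ha1 : a ≤ 1) (hb0 : 0 ≤ b) (hb1 : b ≤ 1) :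
    0 ≤ 16*b^2-16*b^3+4*b^4-4*b^5 +32*a*b+16*a*b^2+16*a*b^3+12*a*b^4+4*a*b^5
      +16*a^2+16*a^2*b-40*a^2*b^2-8*a^2*b^3-16*a^2*b^4
      -16*a^3+16*a^3*b-8*a^3*b^2+24*a^3*b^3 +4*a^4+12*a^4*b-16*a^4*b^2 -4*a^5+4*a^5*b := by
  nlinarith [mul_nonneg ha0 hb0, sq_nonneg (a-b), sq_nonneg (a+b-a*b), sq_nonneg (a*b),
    mul_nonneg (sub_nonneg.2 ha1) (sub_nonneg.2 hb1),
    mul_nonneg (mul_nonneg ha0 hb0) (mul_nonneg (sub_nonneg.2 ha1) (sub_nonneg.2 hb1)),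
    mul_nonneg (mul_nonneg ha0 hb0) (sq_nonneg (a-b)),
    mul_nonneg (mul_nonneg ha0 hb0) (sq_nonneg (a+b)),
    mul_nonneg (mul_nonneg ha0 hb0) (sq_nonneg (a*b)),
    mul_nonneg (mul_nonneg (sub_nonneg.2 ha1) (sub_nonneg.2 hb1)) (sq_nonneg (a-b)),
    mul_nonneg (mul_nonneg (sub_nonneg.2 ha1) (sub_nonneg.2 hb1)) (mul_nonneg ha0 hb0),
    mul_nonneg ha0 (sq_nonneg (b-a*b)), mul_nonneg hb0 (sq_nonneg (a-a*b)),
    mul_nonneg (mul_nonneg ha0 ha0) hb0, mul_nonneg (mul_nonneg hb0 hb0) ha0]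

set_option maxHeartbeats 1000000 in
private lemma aux_core (a b s : ℝ) (ha0 : 0 ≤ a) (ha1 : a ≤ 1) (hb0 : 0 ≤ b) (hb1 : b ≤ 1)
    (hs : s^2 = 8 + (b-a)^2) (hs0 : 0 ≤ s) :
    ((1-a)*b^2+(1-b)*a^2)*(s^2-4) ≤ (8*s^2-s^3-40)*(a+b-a*b) := by
  have hD : 0 ≤ a + b - a*b := by nlinarith [mul_nonneg ha0 (sub_nonneg.2 hb1)]
  have hQ := aux_Q a b ha0 ha1 hb0 hb1
  have hR := aux_R a b ha0 ha1 hb0 hb1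
  have h6 : ((8+(b-a)^2)^3 - (s^2)^3 : ℝ) = 0 := by rw [hs]; ring
  have e2 : ((8*(b-a)^2+24)*(a+b-a*b) - ((b-a)^2+4)*((1-a)*b^2+(1-b)*a^2))^2
      = ((a+b-a*b)*s^3)^2 + (a*b-2*a-2*b+2)^2 *
        (16*b^2-16*b^3+4*b^4-4*b^5 +32*a*b+16*a*b^2+16*a*b^3+12*a*b^4+4*a*b^5
          +16*a^2+16*a^2*b-40*a^2*b^2-8*a^2*b^3-16*a^2*b^4
          -16*a^3+16*a^3*b-8*a^3*b^2+24*a^3*b^3 +4*a^4+12*a^4*b-16*a^4*b^2 -4*a^5+4*a^5*b) := by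
    linear_combination ((a+b-a*b)^2) * h6
  have hT : ((a+b-a*b)*s^3)^2 ≤
      ((8*(b-a)^2+24)*(a+b-a*b) - ((b-a)^2+4)*((1-a)*b^2+(1-b)*a^2))^2 := by
    rw [e2]
    exact le_add_of_nonneg_right (mul_nonneg (sq_nonneg (a*b-2*a-2*b+2)) hR)
  have key : (a+b-a*b)*s^3 ≤
      (8*(b-a)^2+24)*(a+b-a*b) - ((b-a)^2+4)*((1-a)*b^2+(1-b)*a^2) :=
    le_of_pow_le_pow_left₀ two_ne_zero hQ hT
  have e4 : (8*s^2-s^3-40)*(a+b-a*b) - ((1-a)*b^2+(1-b)*a^2)*(s^2-4)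
      = (8*(b-a)^2+24)*(a+b-a*b) - ((b-a)^2+4)*((1-a)*b^2+(1-b)*a^2) - (a+b-a*b)*s^3 := by
    linear_combination (8*(a+b-a*b) - ((1-a)*b^2+(1-b)*a^2)) * hs
  linarith [key, e4]

/-- For `c ∈ [-1,1]`, the maximum of `M(a,b)` over `(a,b) ∈ [0,1]²` with
`b - a = c` equals `M*(c)`, and is attained at `a_c = (4 - c - √(8+c²))/2`. -/
theorem Mstar_isGreatest (c : ℝ) (hc : c ∈ Icc (-1:ℝ) 1) :
    IsGreatest {m : ℝ | ∃ a b : ℝ, a ∈ Icc (0:ℝ) 1 ∧ b ∈ Icc (0:ℝ) 1 ∧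
        b - a = c ∧ m = Mdist a b} (Mstar c) ∧
    Mdist ((4 - c - Real.sqrt (8 + c ^ 2)) / 2)
      ((4 - c - Real.sqrt (8 + c ^ 2)) / 2 + c) = Mstar c := by
  obtain ⟨hc1, hc2⟩ := hc
  set s := Real.sqrt (8 + c ^ 2) with hsdef
  have hs : s ^ 2 = 8 + c ^ 2 := Real.sq_sqrt (by positivity)
  have hs0 : 0 ≤ s := Real.sqrt_nonneg _
  have hs2 : 2 < s := by nlinarith [sq_nonneg c]
  have hs3 : s ≤ 3 := by nlinarith
  have hden4 : (0:ℝ) < s ^ 2 - 4 := by nlinarith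
  have hden2 : (0:ℝ) < s - 2 := by linarith
  -- rewrite Mstar
  have hMs : Mstar c = (8*s^2 - s^3 - 40) / (s^2 - 4) := by
    have h1 : (c ^ 2 + 8 : ℝ) ^ ((3:ℝ)/2) = s ^ 3 := by
      rw [show (3:ℝ)/2 = 1 + 1/2 by norm_num, Real.rpow_add (by positivity), Real.rpow_one,
        ← Real.sqrt_eq_rpow, show (c^2+8 : ℝ) = 8 + c^2 by ring, ← hsdef]
      nlinarith [hs]
    rw [Mstar, h1, show (c^2+4 : ℝ) = s^2 - 4 by linarith]
    field_simp
    ring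
  -- the critical point equality
  have hnum : (1 - (4 - c - s) / 2) * ((4 - c - s) / 2 + c) ^ 2
      + (1 - ((4 - c - s) / 2 + c)) * ((4 - c - s) / 2) ^ 2 = -s^2 + 10*s - 20 := by
    linear_combination (s/4 - 3/2) * hs
  have hden : (4 - c - s) / 2 + ((4 - c - s) / 2 + c)
      - (4 - c - s) / 2 * ((4 - c - s) / 2 + c) = s - 2 := by
    linear_combination (-1/4 : ℝ) * hs
  have hcrit : Mdist ((4 - c - s) / 2) ((4 - c - s) / 2 + c) = Mstar c := by
    rw [Mdist, hnum, hden, hMs, div_eq_div_iff (by linarith) (by linarith)]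
    ring
  refine ⟨⟨⟨(4 - c - s)/2, (4 - c - s)/2 + c, ⟨?_, ?_⟩, ⟨?_, ?_⟩, by ring, hcrit.symm⟩, ?_⟩, hcrit⟩
  · nlinarith
  · nlinarith
  · nlinarith
  · nlinarith
  · -- upper bound
    rintro m ⟨a, b, ⟨ha0, ha1⟩, ⟨hb0, hb1⟩, hab, rfl⟩
    subst hab
    have hD : 0 ≤ a + b - a*b := by nlinarith [mul_nonneg ha0 (sub_nonneg.2 hb1)]
    rcases eq_or_lt_of_le hD with h | h
    · rw [Mdist, ← h, div_zero, hMs]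
      apply div_nonneg _ (le_of_lt hden4)
      nlinarith [mul_nonneg (by linarith : (0:ℝ) ≤ 3 - s) (by positivity : (0:ℝ) ≤ 8 + (b-a)^2)]
    · rw [Mdist, hMs, div_le_div_iff₀ h hden4]
      exact aux_core a b s ha0 ha1 hb0 hb1 hs hs0
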